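/- If p_1 ≤ p_2 are the periods of f_1 and f_2, and the two sequences agree on a window of length p_1 + p_2 (after a shift by u), then p_1 is also a period of f_2 on its whole domain, hence p_1 = p_2. -/

import Mathlib

/-!
Agreement of `f₁` and `f₂` on a window of length `p₁ + p₂` transports the relation
`f₁ i = f₁ (i + p₁)` to `f₂ k = f₂ (k + p₁)` for the `p₂` consecutive positions `k` at the start
of the window. Every position of `{1, …, M₂}` is congruent modulo `p₂` to one of these, and `f₂`
is constant on residue classes modulo its period `p₂`, so `p₁` is a period of `f₂`; minimality
of `p₂` then forces `p₁ = p₂`.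
-/

/-- `IsPeriodicWith f M p` : `p` is a period for the finite sequence `f : {1,...,M} → X`,
i.e. `f j = f (j + p)` whenever both `j` and `j + p` lie in `{1,...,M}`. -/
def IsPeriodicWith {X : Type*} (f : ℤ → X) (M p : ℤ) : Prop :=
  ∀ j : ℤ, 1 ≤ j → j + p ≤ M → f j = f (j + p)

theorem Int.exists_modEq_mem_Ioc (a j : ℤ) {p : ℤ} (hp : 0 < p) :
    ∃ k, a < k ∧ k ≤ a + p ∧ k ≡ j [ZMOD p] := by
  have h₀ := Int.emod_nonneg (j - (a + 1)) hp.ne'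
  have h₁ := Int.emod_lt_of_pos (j - (a + 1)) hp
  refine ⟨a + 1 + (j - (a + 1)) % p, by omega, by omega, ?_⟩
  · simpa using (Int.mod_modEq (j - (a + 1)) p).add_left (a + 1)

namespace IsPeriodicWith

variable {X : Type*} {f : ℤ → X} {M p q : ℤ}

theorem apply_add_mul (hf : IsPeriodicWith f M p) (hp : 0 ≤ p) (n : ℕ) {a : ℤ} (ha : 1 ≤ a)
    (haM : a + n * p ≤ M) : f a = f (a + n * p) := by
  induction n generalizing a with
  | zero => simp
  | succ n ih =>
    push_cast at haM ⊢
    have hnp : 0 ≤ (n : ℤ) * p := by positivity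
    rw [hf a ha (by linarith), ih (by linarith) (by linarith)]
    ring_nf

theorem apply_eq_of_modEq_of_le (hf : IsPeriodicWith f M p) (hp : 0 ≤ p) {a b : ℤ}
    (ha : 1 ≤ a) (hbM : b ≤ M) (hab : a ≤ b) (h : a ≡ b [ZMOD p]) : f a = f b := by
  obtain ⟨t, ht⟩ := h.dvd
  rcases hp.eq_or_lt with rfl | hp
  · rw [show b = a by linarith]
  have ht₀ : 0 ≤ t := nonneg_of_mul_nonneg_right (by linarith) hp
  lift t to ℕ using ht₀
  rw [show b = a + t * p by linarith] at hbM ⊢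
  exact hf.apply_add_mul hp.le t ha hbM

theorem apply_eq_of_modEq (hf : IsPeriodicWith f M p) (hp : 0 ≤ p) {a b : ℤ}
    (ha : 1 ≤ a) (haM : a ≤ M) (hb : 1 ≤ b) (hbM : b ≤ M) (h : a ≡ b [ZMOD p]) : f a = f b := by
  rcases le_total a b with hab | hba
  · exact hf.apply_eq_of_modEq_of_le hp ha hbM hab h
  · exact (hf.apply_eq_of_modEq_of_le hp hb haM hba h.symm).symm

theorem of_window (hf : IsPeriodicWith f M q) (hq : 0 < q) (hp : 0 ≤ p) {a : ℤ} (ha : 0 ≤ a)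
    (haM : a + q + p ≤ M) (hwin : ∀ k, a < k → k ≤ a + q → f k = f (k + p)) :
    IsPeriodicWith f M p := by
  intro j hj hjM
  obtain ⟨k, hak, hka, hkj⟩ := Int.exists_modEq_mem_Ioc a j hq
  calc f j = f k := hf.apply_eq_of_modEq hq.le hj (by omega) (by omega) (by omega) hkj.symm
    _ = f (k + p) := hwin k hak hka
    _ = f (j + p) :=
      hf.apply_eq_of_modEq hq.le (by omega) (by omega) (by omega) hjM (hkj.add_right p)

end IsPeriodicWith

theorem stmt_1_general {X : Type*} (M₁ M₂ : ℤ)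
    (f₁ f₂ : ℤ → X) (p₁ p₂ : ℤ)
    (hp₁ : IsLeast {p : ℤ | 0 < p ∧ IsPeriodicWith f₁ M₁ p} p₁)
    (hp₂ : IsLeast {p : ℤ | 0 < p ∧ IsPeriodicWith f₂ M₂ p} p₂)
    (hle : p₁ ≤ p₂)
    (u v : ℤ)
    (hwin : ∀ i : ℤ, v + 1 ≤ i → i ≤ v + p₁ + p₂ →
      (1 ≤ i ∧ i ≤ M₁) ∧ (1 ≤ u + i ∧ u + i ≤ M₂) ∧ f₁ i = f₂ (u + i)) :
    IsPeriodicWith f₂ M₂ p₁ ∧ p₁ = p₂ := by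
  obtain ⟨⟨hp₁pos, hf₁⟩, -⟩ := hp₁
  obtain ⟨⟨hp₂pos, hf₂⟩, hp₂min⟩ := hp₂
  have hstart : 1 ≤ u + (v + 1) := (hwin (v + 1) le_rfl (by omega)).2.1.1
  have hend : u + (v + p₁ + p₂) ≤ M₂ := (hwin (v + p₁ + p₂) (by omega) le_rfl).2.1.2
  have hper : IsPeriodicWith f₂ M₂ p₁ := by
    refine hf₂.of_window hp₂pos hp₁pos.le (a := u + v) (by omega) (by omega) fun k hk hk' ↦ ?_
    obtain ⟨⟨hi, -⟩, -, hfi⟩ := hwin (k - u) (by omega) (by omega)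
    obtain ⟨⟨-, hiM⟩, -, hfi'⟩ := hwin (k - u + p₁) (by omega) (by omega)
    calc f₂ k = f₁ (k - u) := by rw [hfi, add_sub_cancel]
      _ = f₁ (k - u + p₁) := hf₁ _ hi hiM
      _ = f₂ (k + p₁) := by rw [hfi']; ring_nf
  exact ⟨hper, le_antisymm hle (hp₂min ⟨hp₁pos, hper⟩)⟩

theorem stmt_1 {X : Type*} (M₁ M₂ : ℤ) (hM₁ : 0 < M₁) (hM₂ : 0 < M₂)
    (f₁ f₂ : ℤ → X) (p₁ p₂ : ℤ)
    (hp₁ : IsLeast {p : ℤ | 0 < p ∧ IsPeriodicWith f₁ M₁ p} p₁)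
    (hp₂ : IsLeast {p : ℤ | 0 < p ∧ IsPeriodicWith f₂ M₂ p} p₂)
    (hle : p₁ ≤ p₂)
    (u v : ℤ)
    (hwin : ∀ i : ℤ, v + 1 ≤ i → i ≤ v + p₁ + p₂ →
      (1 ≤ i ∧ i ≤ M₁) ∧ (1 ≤ u + i ∧ u + i ≤ M₂) ∧ f₁ i = f₂ (u + i)) :
    IsPeriodicWith f₂ M₂ p₁ ∧ p₁ = p₂ :=
  stmt_1_general M₁ M₂ f₁ f₂ p₁ p₂ hp₁ hp₂ hle u v hwin
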